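/- arXiv:1205.1504 — 4 statements merged into one kernel-verified Lean document; each statement's English description precedes it below -/
import Mathlib

section
/- Let C be a k-linear Hom-finite 2-Calabi-Yau triangulated category, D a functorially finite rigid subcategory, and Z = ^⊥(D[1]). For any two objects X, Y ∈ Z, there is an isomorphism of k-vector spaces Ext¹_C(Y, X) ≅ Ext¹_{C_D}(Y, X), where C_D = Z/D is the Iyama–Yoshino subfactor triangulated category with shift ⟨1⟩ defined by triangles X → D_X → X⟨1⟩ → X[1] in which X → D_X is a left D-approximation. -/
open CategoryTheory CategoryTheory.Limits CategoryTheory.Pretriangulated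

variable {k : Type*} [Field k]
variable {C : Type*} [Category C] [Preadditive C] [Linear k C] [HasZeroObject C]
  [HasShift C ℤ] [∀ n : ℤ, (CategoryTheory.shiftFunctor C n).Additive] [Pretriangulated C]

/-- The subspace of `Hom(A, B)` of morphisms factoring through an object of `D`
(the linear span of such morphisms; it coincides with the set of such morphisms
when `D` is additive). -/
def factorSub (D : Set C) (A B : C) : Submodule k (A ⟶ B) :=
  Submodule.span k {f | ∃ D₀ ∈ D, ∃ u : A ⟶ D₀, ∃ v : D₀ ⟶ B, u ≫ v = f}

/-- `f : A ⟶ D_A` is a left `D`-approximation. -/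
def IsLeftApprox (D : Set C) {A DA : C} (f : A ⟶ DA) : Prop :=
  DA ∈ D ∧ ∀ D' ∈ D, ∀ u : A ⟶ D', ∃ t : DA ⟶ D', f ≫ t = u

/-- `g : DA ⟶ B` is a right `D`-approximation of `B`. -/
def IsRightApprox (D : Set C) {DA B : C} (g : DA ⟶ B) : Prop :=
  DA ∈ D ∧ ∀ D' ∈ D, ∀ u : D' ⟶ B, ∃ t : D' ⟶ DA, t ≫ g = u

/-- Let `C` be `k`-linear Hom-finite `2`-Calabi-Yau, `D` a functorially finite
rigid subcategory and `Z = ⊥(D[1])`.  For `X, Y ∈ Z` and a triangle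
`X → D_X → X⟨1⟩ → X[1]` defining the shift of the Iyama–Yoshino subfactor category
`C_D = Z/D`, we have `Ext¹_C(Y, X) ≅ Ext¹_{C_D}(Y, X)`, where
`Ext¹_{C_D}(Y, X) = Hom_{Z/D}(Y, X⟨1⟩) = Hom_C(Y, X⟨1⟩)/D(Y, X⟨1⟩)`. -/
theorem ext_iso_subfactor [HasBinaryBiproducts C]
    (homFin : ∀ A B : C, FiniteDimensional k (A ⟶ B))
    (CY : ∀ A B : C, Nonempty ((A ⟶ B⟦(1 : ℤ)⟧) ≃ₗ[k] Module.Dual k (B ⟶ A⟦(1 : ℤ)⟧)))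
    (D : Set C)
    (hrigid : ∀ A ∈ D, ∀ B ∈ D, ∀ f : A ⟶ B⟦(1 : ℤ)⟧, f = 0)
    (hff : ∀ M : C, (∃ (DM : C) (f : M ⟶ DM), IsLeftApprox D f) ∧
      (∃ (DM : C) (g : DM ⟶ M), IsRightApprox D g))
    (X Y : C)
    (hXZ : ∀ D₀ ∈ D, ∀ f : X ⟶ D₀⟦(1 : ℤ)⟧, f = 0)
    (hYZ : ∀ D₀ ∈ D, ∀ f : Y ⟶ D₀⟦(1 : ℤ)⟧, f = 0)
    (DX XS : C) (f : X ⟶ DX) (g : DX ⟶ XS) (h : XS ⟶ X⟦(1 : ℤ)⟧)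
    (hT : Triangle.mk f g h ∈ distTriang C)
    (hf : IsLeftApprox D f) (hg : IsRightApprox D g) :
    Nonempty ((Y ⟶ X⟦(1 : ℤ)⟧) ≃ₗ[k] ((Y ⟶ XS) ⧸ factorSub (k := k) D Y XS)) := by
  classical
  set φ : (Y ⟶ XS) →ₗ[k] (Y ⟶ X⟦(1 : ℤ)⟧) := Linear.rightComp k Y h with hφ
  have hgh : g ≫ h = 0 := comp_distTriang_mor_zero₂₃ _ hT
  have hsurj : Function.Surjective φ := by
    intro a
    have h0 : a ≫ (Triangle.mk f g h).mor₁⟦(1 : ℤ)⟧' = 0 :=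
      hYZ DX hf.1 _
    obtain ⟨b, hb⟩ := Triangle.coyoneda_exact₁ _ hT a h0
    exact ⟨b, hb.symm⟩
  have hker : LinearMap.ker φ = factorSub (k := k) D Y XS := by
    apply le_antisymm
    · intro v hv
      have hv0 : v ≫ h = 0 := hv
      obtain ⟨u, hu⟩ := Triangle.coyoneda_exact₃ _ hT v hv0
      exact Submodule.subset_span ⟨DX, hf.1, u, g, hu.symm⟩
    · rw [factorSub, Submodule.span_le]
      rintro v ⟨D₀, hD₀, u, w, rfl⟩
      obtain ⟨t, ht⟩ := hg.2 D₀ hD₀ w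
      have : (u ≫ w) ≫ h = 0 := by
        rw [← ht, Category.assoc, Category.assoc, hgh, comp_zero, comp_zero]
      exact this
  exact ⟨(LinearMap.quotKerEquivOfSurjective φ hsurj).symm.trans
    (Submodule.quotEquivOfEq _ _ hker)⟩
end

section
/- Let C be a k-linear Hom-finite triangulated category, X ∈ C, and X →f D_X →g Z → X[1] a distinguished triangle where f is a left D-approximation of X for a subcategory D with Hom(Y, D[1]) = 0 for a fixed object Y. Then for any such Y, Hom_C(Y, X[1]) ≅ Hom_C(Y, Z)/Im(Hom_C(Y, g)) as k-vector spaces, and if moreover g is a right D-approximation of Z then Im(Hom_C(Y, g)) equals the subspace D(Y, Z) of morphisms from Y to Z factoring through an object of D. -/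
open CategoryTheory CategoryTheory.Limits CategoryTheory.Pretriangulated

variable {k : Type*} [Field k]
variable {C : Type*} [Category C] [Preadditive C] [Linear k C] [HasZeroObject C]
  [HasShift C ℤ] [∀ n : ℤ, (CategoryTheory.shiftFunctor C n).Additive] [Pretriangulated C]

/-- given a triangle `X → D_X → Z → X[1]` with `X → D_X` a left
`D`-approximation and `Hom(Y, D[1]) = 0`, we have
`Hom(Y, X[1]) ≅ Hom(Y, Z)/Im(Hom(Y, g))`; moreover if `g` is a right
`D`-approximation of `Z` then `Im(Hom(Y, g))` is the subspace `D(Y, Z)` of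
morphisms factoring through `D`. -/
theorem hom_shift_iso_quotient (D : Set C) (X DX Z Y : C)
    (f : X ⟶ DX) (g : DX ⟶ Z) (h : Z ⟶ X⟦(1 : ℤ)⟧)
    (hT : Triangle.mk f g h ∈ distTriang C)
    (hf : IsLeftApprox D f)
    (hY : ∀ D₀ ∈ D, ∀ u : Y ⟶ D₀⟦(1 : ℤ)⟧, u = 0) :
    Nonempty ((Y ⟶ X⟦(1 : ℤ)⟧) ≃ₗ[k]
      ((Y ⟶ Z) ⧸ LinearMap.range (Linear.rightComp k Y g))) ∧
    (IsRightApprox D g →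
      LinearMap.range (Linear.rightComp k Y g) = factorSub (k := k) D Y Z) := by
  constructor
  · -- first part: Hom(Y, X[1]) ≅ Hom(Y, Z)/Im
    set φ : (Y ⟶ Z) →ₗ[k] (Y ⟶ X⟦(1 : ℤ)⟧) := Linear.rightComp k Y h with hφ
    have hsurj : Function.Surjective φ := by
      intro u
      obtain ⟨v, hv⟩ := Triangle.coyoneda_exact₁ _ hT u
        (hY DX hf.1 _)
      exact ⟨v, hv.symm⟩
    have hker : LinearMap.ker φ = LinearMap.range (Linear.rightComp k Y g) := by
      ext e
      constructor
      · intro he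
        obtain ⟨t, ht⟩ := Triangle.coyoneda_exact₃ _ hT e he
        exact ⟨t, ht.symm⟩
      · rintro ⟨t, rfl⟩
        show (t ≫ g) ≫ h = 0
        rw [Category.assoc, show g ≫ h = 0 from comp_distTriang_mor_zero₂₃ _ hT,
          Limits.comp_zero]
    rw [← hker]
    exact ⟨(φ.quotKerEquivOfSurjective hsurj).symm⟩
  · intro hg
    apply le_antisymm
    · rintro e ⟨t, rfl⟩
      exact Submodule.subset_span ⟨DX, hf.1, t, g, rfl⟩
    · rw [factorSub, Submodule.span_le]
      rintro e ⟨D₀, hD₀, u, v, rfl⟩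
      obtain ⟨t, ht⟩ := hg.2 D₀ hD₀ v
      exact ⟨u ≫ t, by simp [ht]⟩
end

section
/- Let Q be a finite quiver and I an admissible ideal of kQ such that A = kQ/I is a string algebra. For two strings w and v, the set of canonical homomorphisms {f_a : a ∈ F(w) × S(v) admissible pair} forms a k-basis of Hom_A(M(w), M(v)), where F(w) is the set of factor strings of w, S(v) is the set of substrings of v, and a pair ((E₁, w₀, F₁), (E₂, v₀, F₂)) is admissible if w₀ = v₀ or w₀⁻¹ = v₀, with f_a the map identifying the factor module M(w₀) of M(w) with the submodule M(v₀) of M(v). -/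
open Matrix

/-- A finite quiver, given by vertices, arrows, and source/target maps. -/
structure QuiverData where
  V : Type
  E : Type
  src : E → V
  tgt : E → V

namespace QuiverData

variable (Q : QuiverData)

/-- A letter: an arrow (`Sum.inl`, direct) or a formal inverse of an arrow (`Sum.inr`). -/
abbrev Letter := Q.E ⊕ Q.E

/-- Source of a letter. -/
def lsrc : Q.Letter → Q.V
  | Sum.inl e => Q.src e
  | Sum.inr e => Q.tgt e

/-- Target of a letter. -/
def ltgt : Q.Letter → Q.V
  | Sum.inl e => Q.tgt e
  | Sum.inr e => Q.src e

/-- Formal inverse of a letter. -/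
def linv : Q.Letter → Q.Letter
  | Sum.inl e => Sum.inr e
  | Sum.inr e => Sum.inl e

/-- A list of arrows is a path when consecutive arrows are composable. -/
def IsPath (ρ : List Q.E) : Prop :=
  ρ.Chain' fun e e' => Q.tgt e = Q.src e'

/-- A walk in the quiver: `n` is its length, `v i` (for `i ≤ n`) are the visited
vertices and `a i` (for `i < n`) the letters. -/
structure Walk where
  n : ℕ
  v : ℕ → Q.V
  a : ℕ → Q.Letter

variable {Q}

/-- `w` is a string for the relations `Irel`: a reduced walk such that no subword of
`w` nor of its inverse is a relation. -/
def Walk.IsString (Irel : List Q.E → Prop) (w : Q.Walk) : Prop :=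
  (∀ i < w.n, Q.lsrc (w.a i) = w.v i ∧ Q.ltgt (w.a i) = w.v (i + 1)) ∧
  (∀ i, i + 1 < w.n → w.a (i + 1) ≠ Q.linv (w.a i)) ∧
  (∀ ρ : List Q.E, Irel ρ → ∀ i, i + ρ.length ≤ w.n →
      ¬ (∀ p e, ρ[(p : ℕ)]? = some e → w.a (i + p) = Sum.inl e) ∧
      ¬ (∀ p e, ρ[(p : ℕ)]? = some e → w.a (i + (ρ.length - 1 - p)) = Sum.inr e))

variable (k : Type) [Field k] [DecidableEq Q.E] [DecidableEq Q.V]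

/-- The action of the arrow `e` on the string module `M(w)`, written in the canonical
basis `b_0, …, b_n` of `M(w)` indexed by the positions of the walk `w`. -/
def actM (w : Q.Walk) (e : Q.E) : Matrix (Fin (w.n + 1)) (Fin (w.n + 1)) k :=
  fun j i =>
    if ((i : ℕ) < w.n ∧ w.a i = Sum.inl e ∧ (j : ℕ) = (i : ℕ) + 1) ∨
       ((j : ℕ) < w.n ∧ w.a j = Sum.inr e ∧ (i : ℕ) = (j : ℕ) + 1) then 1 else 0

/-- The projection of `M(w)` onto the span of basis vectors sitting at the vertex `x`
(encoding the grading of `M(w)` by vertices). -/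
def projM (w : Q.Walk) (x : Q.V) : Matrix (Fin (w.n + 1)) (Fin (w.n + 1)) k :=
  Matrix.diagonal fun i => if w.v i = x then 1 else 0

/-- The space `Hom_A(M(w), M(z))` of module homomorphisms between the string modules
`M(w)` and `M(z)`: matrices commuting with the vertex projections and with the action
of every arrow. -/
def homModule (w z : Q.Walk) :
    Submodule k (Matrix (Fin (z.n + 1)) (Fin (w.n + 1)) k) where
  carrier := {F | (∀ x : Q.V, F * projM k w x = projM k z x * F) ∧
    ∀ e : Q.E, F * actM k w e = actM k z e * F}
  add_mem' := by
    rintro F G ⟨hF1, hF2⟩ ⟨hG1, hG2⟩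
    exact ⟨fun x => by rw [Matrix.add_mul, Matrix.mul_add, hF1 x, hG1 x],
      fun e => by rw [Matrix.add_mul, Matrix.mul_add, hF2 e, hG2 e]⟩
  zero_mem' := ⟨fun x => by simp, fun e => by simp⟩
  smul_mem' := by
    rintro c F ⟨hF1, hF2⟩
    exact ⟨fun x => by rw [Matrix.smul_mul, Matrix.mul_smul, hF1 x],
      fun e => by rw [Matrix.smul_mul, Matrix.mul_smul, hF2 e]⟩

variable (Q)

/-- An admissible pair for the walks `w` and `z`: a factor string of `w` (the window
`[i₁, i₁ + d]` of `w`) and a substring of `z` (the window `[i₂, i₂ + d]` of `z`) whose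
induced strings coincide (`rev = false`) or are inverse to each other (`rev = true`). -/
structure AdmPair (w z : Q.Walk) where
  i₁ : ℕ
  i₂ : ℕ
  d : ℕ
  rev : Bool
  hw : i₁ + d ≤ w.n
  hz : i₂ + d ≤ z.n
  /-- `(E, w₀, F)` is a factor string of `w`: `E` is empty or ends suitably, -/
  factorLeft : i₁ = 0 ∨ ∃ e, w.a (i₁ - 1) = Sum.inr e
  /-- and `F` is empty or starts suitably. -/
  factorRight : i₁ + d = w.n ∨ ∃ e, w.a (i₁ + d) = Sum.inl e
  /-- `(E', v₀, F')` is a substring of `z`. -/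
  subLeft : i₂ = 0 ∨ ∃ e, z.a (i₂ - 1) = Sum.inl e
  subRight : i₂ + d = z.n ∨ ∃ e, z.a (i₂ + d) = Sum.inr e
  /-- `w₀ = v₀` (if `rev = false`) or `w₀⁻¹ = v₀` (if `rev = true`). -/
  match_ : if rev then
      (∀ p ≤ d, w.v (i₁ + p) = z.v (i₂ + d - p)) ∧
        ∀ p < d, w.a (i₁ + p) = Q.linv (z.a (i₂ + d - 1 - p))
    else
      (∀ p ≤ d, w.v (i₁ + p) = z.v (i₂ + p)) ∧
        ∀ p < d, w.a (i₁ + p) = z.a (i₂ + p)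
  /-- no double counting of trivial overlaps. -/
  nodup : d = 0 → rev = false

variable {Q}

/-- The canonical homomorphism `f_a : M(w) → M(z)` attached to an admissible pair:
project onto the factor module given by the window of `w` and include it as the
submodule given by the window of `z`. -/
def canonMat {w z : Q.Walk} (P : AdmPair Q w z) :
    Matrix (Fin (z.n + 1)) (Fin (w.n + 1)) k :=
  fun j i =>
    if P.i₁ ≤ (i : ℕ) ∧ (i : ℕ) ≤ P.i₁ + P.d ∧
        (j : ℕ) = (if P.rev then P.i₂ + P.d - ((i : ℕ) - P.i₁)
                   else P.i₂ + ((i : ℕ) - P.i₁))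
      then 1 else 0

end QuiverData

open QuiverData

/-!
A homomorphism `F : M(w) → M(z)` is a matrix indexed by the grid of pairs `(i, j)` of
positions of `w` and `z`. Commuting with the arrow `e` says two things: `F` is constant along
a joint step, where `w` and `z` move along the same letter, and `F` vanishes at `(i, j)` when
`w` has an inverse letter at `i`, or `z` a direct letter at `j`, that the other walk cannot
follow. As the walks are reduced, the joint steps cut the grid into diagonal and antidiagonal
segments. On a maximal one `F` is constant, and it vanishes unless the segment ends with no
such unmatched letter, which is exactly when it is an admissible pair. So `F` is a
combination of the indicator matrices `f_a` of the admissible segments, and these have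
pairwise disjoint supports.
-/

lemma Nat.forall_of_iff_succ {P : ℕ → Prop} {a b c : ℕ} (hac : a ≤ c) (hcb : c ≤ b)
    (hc : P c) (h : ∀ i, a ≤ i → i < b → (P i ↔ P (i + 1))) {i : ℕ} (hai : a ≤ i)
    (hib : i ≤ b) : P i := by
  have ha : P a := by
    obtain ⟨n, rfl⟩ := Nat.exists_eq_add_of_le hac
    induction n with
    | zero => exact hc
    | succ n ih => exact ih (by omega) (by omega) ((h (a + n) (by omega) (by omega)).2 hc)
  induction i, hai using Nat.le_induction with
  | base => exact ha
  | succ i hi ih => exact (h i hi (by omega)).1 (ih (by omega))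

namespace QuiverData

/-! ### Steps of walks -/

section Walks

variable {Q : QuiverData}

@[simp]
lemma linv_linv (x : Q.Letter) : Q.linv (Q.linv x) = x := by cases x <;> rfl

lemma lsrc_linv (x : Q.Letter) : Q.lsrc (Q.linv x) = Q.ltgt x := by cases x <;> rfl

lemma ltgt_linv (x : Q.Letter) : Q.ltgt (Q.linv x) = Q.lsrc x := by cases x <;> rfl

namespace Walk

def Step (w : Q.Walk) (i : ℕ) (l : Q.Letter) (i' : ℕ) : Prop :=
  (i < w.n ∧ w.a i = l ∧ i' = i + 1) ∨ (i' < w.n ∧ w.a i' = Q.linv l ∧ i = i' + 1)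

instance [DecidableEq Q.E] (w : Q.Walk) (i : ℕ) (l : Q.Letter) (i' : ℕ) :
    Decidable (w.Step i l i') := by
  unfold Step; infer_instance

def IsCoherent (w : Q.Walk) : Prop :=
  ∀ i < w.n, Q.lsrc (w.a i) = w.v i ∧ Q.ltgt (w.a i) = w.v (i + 1)

def IsReduced (w : Q.Walk) : Prop :=
  ∀ i, i + 1 < w.n → w.a (i + 1) ≠ Q.linv (w.a i)

variable {w : Q.Walk} {i i' i'' : ℕ} {l l' : Q.Letter}

lemma step_succ_iff : w.Step i l (i + 1) ↔ i < w.n ∧ w.a i = l := by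
  simp only [Step]
  constructor
  · rintro (⟨hi, hl, -⟩ | ⟨-, -, h⟩)
    · exact ⟨hi, hl⟩
    · omega
  · exact fun h => Or.inl ⟨h.1, h.2, trivial⟩

lemma succ_step_iff : w.Step (i + 1) l i ↔ i < w.n ∧ w.a i = Q.linv l := by
  simp only [Step]
  constructor
  · rintro (⟨-, -, h⟩ | ⟨hi, hl, -⟩)
    · omega
    · exact ⟨hi, hl⟩
  · exact fun h => Or.inr ⟨h.1, h.2, trivial⟩

lemma step_linv_iff : w.Step i' (Q.linv l) i ↔ w.Step i l i' := by
  simp only [Step, linv_linv]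
  tauto

lemma Step.reverse (h : w.Step i l i') : w.Step i' (Q.linv l) i :=
  step_linv_iff.2 h

lemma Step.le (h : w.Step i l i') : i ≤ w.n ∧ i' ≤ w.n := by
  rcases h with ⟨_, _, rfl⟩ | ⟨_, _, rfl⟩ <;> omega

lemma Step.adj (h : w.Step i l i') : i' = i + 1 ∨ i = i' + 1 := by
  rcases h with ⟨_, _, h⟩ | ⟨_, _, h⟩ <;> omega

lemma Step.letter_eq (h : w.Step i l i') (h' : w.Step i l' i') : l = l' := by
  rcases h with ⟨_, rfl, rfl⟩ | ⟨_, hl, rfl⟩ <;> rcases h' with ⟨_, hl', _⟩ | ⟨_, hl', _⟩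
  · exact hl'
  · omega
  · omega
  · simpa using congrArg Q.linv (hl.symm.trans hl')

lemma IsReduced.step_unique (hw : w.IsReduced) (h : w.Step i l i') (h' : w.Step i l i'') :
    i' = i'' := by
  rcases h with ⟨_, hl, rfl⟩ | ⟨_, hl, rfl⟩ <;> rcases h' with ⟨_, hl', rfl⟩ | ⟨_, hl', h⟩
  · rfl
  · subst h; exact absurd (by rw [hl, hl', linv_linv]) (hw i'' (by omega))
  · exact absurd (by rw [hl', hl, linv_linv]) (hw i' (by omega))
  · omega

lemma IsCoherent.step_vertex (hw : w.IsCoherent) (h : w.Step i l i') :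
    w.v i = Q.lsrc l ∧ w.v i' = Q.ltgt l := by
  rcases h with ⟨hi, rfl, rfl⟩ | ⟨hi, hl, rfl⟩
  · exact ⟨(hw i hi).1.symm, (hw i hi).2.symm⟩
  · rw [← linv_linv l, ← hl, lsrc_linv, ltgt_linv]
    exact ⟨(hw i' hi).2.symm, (hw i' hi).1.symm⟩

def JointStep (w z : Q.Walk) (x y : ℕ × ℕ) : Prop :=
  ∃ l, w.Step x.1 l y.1 ∧ z.Step x.2 l y.2

/-- At the ends of a closed segment these are the factor and substring conditions of
`AdmPair`. -/
def SaturatedAt (w z : Q.Walk) (x : ℕ × ℕ) : Prop :=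
  (∀ e i', w.Step x.1 (Sum.inr e) i' → ∃ j', z.Step x.2 (Sum.inr e) j') ∧
    ∀ e j', z.Step x.2 (Sum.inl e) j' → ∃ i', w.Step x.1 (Sum.inl e) i'

variable {z : Q.Walk} {x y y' : ℕ × ℕ}

lemma JointStep.symm (h : JointStep w z x y) : JointStep w z y x :=
  let ⟨l, hw, hz⟩ := h
  ⟨Q.linv l, hw.reverse, hz.reverse⟩

lemma JointStep.eq_of_fst_eq (hz : z.IsReduced) (h : JointStep w z x y)
    (h' : JointStep w z x y') (hy : y.1 = y'.1) : y = y' := by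
  obtain ⟨l, hw₁, hz₁⟩ := h
  obtain ⟨l', hw₂, hz₂⟩ := h'
  rw [hy] at hw₁
  obtain rfl := hw₁.letter_eq hw₂
  exact Prod.ext hy (hz.step_unique hz₁ hz₂)

lemma JointStep.eq_of_snd_eq (hw : w.IsReduced) (h : JointStep w z x y)
    (h' : JointStep w z x y') (hy : y.2 = y'.2) : y = y' := by
  obtain ⟨l, hw₁, hz₁⟩ := h
  obtain ⟨l', hw₂, hz₂⟩ := h'
  rw [hy] at hz₁
  obtain rfl := hz₁.letter_eq hz₂
  exact Prod.ext (hw.step_unique hw₁ hw₂) hy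

lemma JointStep.vertex_eq (hw : w.IsCoherent) (hz : z.IsCoherent) (h : JointStep w z x y) :
    w.v y.1 = z.v y.2 := by
  obtain ⟨l, hw₁, hz₁⟩ := h
  rw [(hw.step_vertex hw₁).2, (hz.step_vertex hz₁).2]

end Walk

end Walks

/-! ### Entries of homomorphisms between string modules -/

section Entries

variable {Q : QuiverData} {k : Type} [Field k]

/-- Matrix entries indexed by natural numbers, with `0` outside the matrix. -/
def natEntry {m n : ℕ} (F : Matrix (Fin m) (Fin n) k) (j i : ℕ) : k :=
  if h : j < m ∧ i < n then F ⟨j, h.1⟩ ⟨i, h.2⟩ else 0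

lemma natEntry_fin {m n : ℕ} (F : Matrix (Fin m) (Fin n) k) (j : Fin m) (i : Fin n) :
    natEntry F j i = F j i := by
  simp [natEntry]

lemma natEntry_ne_zero {m n : ℕ} {F : Matrix (Fin m) (Fin n) k} {j i : ℕ}
    (h : natEntry F j i ≠ 0) : j < m ∧ i < n := by
  by_contra h'
  exact h (dif_neg h')

variable [DecidableEq Q.E] {w z : Q.Walk}

namespace Walk

lemma IsReduced.sum_ite_step (hw : w.IsReduced) {i i₀ : ℕ} {l : Q.Letter}
    (h : w.Step i l i₀) (f : ℕ → k) :
    ∑ i' : Fin (w.n + 1), (if w.Step i l i' then f i' else 0) = f i₀ := by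
  rw [Finset.sum_eq_single ⟨i₀, Nat.lt_succ_of_le h.le.2⟩, if_pos h]
  · intro i' _ hne
    rw [if_neg fun h' => hne (Fin.ext (hw.step_unique h' h))]
  · simp

lemma sum_ite_step_eq_zero {i : ℕ} {l : Q.Letter} {f : ℕ → k}
    (h : ∀ i', w.Step i l i' → f i' = 0) :
    ∑ i' : Fin (w.n + 1), (if w.Step i l i' then f i' else 0) = 0 :=
  Finset.sum_eq_zero fun i' _ => by split_ifs with h'; exacts [h _ h', rfl]

open Classical in
lemma IsReduced.sum_ite_step_ite (hw : w.IsReduced) {i : ℕ} {l : Q.Letter}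
    (p : ℕ → Prop) :
    ∑ i' : Fin (w.n + 1), (if w.Step i l i' then (if p i' then 1 else 0) else 0 : k) =
      if ∃ i', w.Step i l i' ∧ p i' then 1 else 0 := by
  split_ifs with h
  · obtain ⟨i₀, hs, hp⟩ := h
    rw [hw.sum_ite_step hs (fun i' => if p i' then 1 else 0), if_pos hp]
  · exact sum_ite_step_eq_zero fun i' hs => if_neg fun hp => h ⟨i', hs, hp⟩

end Walk

lemma actM_apply (w : Q.Walk) (e : Q.E) (j i : Fin (w.n + 1)) :
    actM k w e j i = if w.Step i (Sum.inl e) j then 1 else 0 :=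
  rfl

lemma mul_actM_apply (F : Matrix (Fin (z.n + 1)) (Fin (w.n + 1)) k) (e : Q.E)
    (j : Fin (z.n + 1)) (i : Fin (w.n + 1)) :
    (F * actM k w e) j i =
      ∑ i' : Fin (w.n + 1), if w.Step i (Sum.inl e) i' then natEntry F j i' else 0 := by
  simp [Matrix.mul_apply, actM_apply, natEntry_fin]

lemma actM_mul_apply (F : Matrix (Fin (z.n + 1)) (Fin (w.n + 1)) k) (e : Q.E)
    (j : Fin (z.n + 1)) (i : Fin (w.n + 1)) :
    (actM k z e * F) j i =
      ∑ j' : Fin (z.n + 1), if z.Step j (Sum.inr e) j' then natEntry F j' i else 0 := by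
  simp only [Matrix.mul_apply, actM_apply, ite_mul, one_mul, zero_mul, natEntry_fin]
  exact Finset.sum_congr rfl fun j' _ =>
    if_congr (Walk.step_linv_iff (l := Sum.inl e)).symm rfl rfl

variable [DecidableEq Q.V] {F : Matrix (Fin (z.n + 1)) (Fin (w.n + 1)) k}

open Walk

lemma sum_step_natEntry_eq (hF : F ∈ homModule k w z) (e : Q.E) {i j : ℕ}
    (hi : i ≤ w.n) (hj : j ≤ z.n) :
    ∑ i' : Fin (w.n + 1), (if w.Step i (Sum.inl e) i' then natEntry F j i' else 0) =
      ∑ j' : Fin (z.n + 1), if z.Step j (Sum.inr e) j' then natEntry F j' i else 0 := by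
  have h := congrFun (congrFun (hF.2 e) ⟨j, by omega⟩) ⟨i, by omega⟩
  rwa [mul_actM_apply, actM_mul_apply] at h

lemma natEntry_eq_of_jointStep (hF : F ∈ homModule k w z) (hw : w.IsReduced)
    (hz : z.IsReduced) {x y : ℕ × ℕ} (h : JointStep w z x y) :
    natEntry F y.2 y.1 = natEntry F x.2 x.1 := by
  obtain ⟨l | e, hwl, hzl⟩ := h
  · have := sum_step_natEntry_eq hF l hwl.le.1 hzl.le.2
    rwa [hw.sum_ite_step hwl,
      hz.sum_ite_step (l := .inr l) hzl.reverse (natEntry F · x.1)] at this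
  · have := sum_step_natEntry_eq hF e hwl.le.2 hzl.le.1
    rw [hw.sum_ite_step (l := .inl e) hwl.reverse,
      hz.sum_ite_step hzl (natEntry F · y.1)] at this
    exact this.symm

lemma natEntry_eq_zero_of_step_inr (hF : F ∈ homModule k w z) (hw : w.IsReduced)
    {e : Q.E} {i i' j : ℕ} (h : w.Step i (Sum.inr e) i')
    (hz : ∀ j', ¬ z.Step j (Sum.inr e) j') : natEntry F j i = 0 := by
  by_cases hj : j ≤ z.n
  · have := sum_step_natEntry_eq hF e h.le.2 hj
    rwa [hw.sum_ite_step (l := .inl e) h.reverse,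
      sum_ite_step_eq_zero (f := (natEntry F · i')) fun j' h' => absurd h' (hz j')] at this
  · exact dif_neg (by omega)

lemma natEntry_eq_zero_of_step_inl (hF : F ∈ homModule k w z) (hz : z.IsReduced)
    {e : Q.E} {i j j' : ℕ} (h : z.Step j (Sum.inl e) j')
    (hw : ∀ i', ¬ w.Step i (Sum.inl e) i') : natEntry F j i = 0 := by
  by_cases hi : i ≤ w.n
  · have := sum_step_natEntry_eq hF e hi h.le.2
    rw [hz.sum_ite_step (l := .inr e) h.reverse (natEntry F · i),
      sum_ite_step_eq_zero fun i' h' => absurd h' (hw i')] at this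
    exact this.symm
  · exact dif_neg (by omega)

lemma saturatedAt_of_natEntry_ne_zero (hF : F ∈ homModule k w z) (hw : w.IsReduced)
    (hz : z.IsReduced) {x : ℕ × ℕ} (hx : natEntry F x.2 x.1 ≠ 0) : SaturatedAt w z x := by
  refine ⟨fun e i' h => ?_, fun e j' h => ?_⟩ <;> by_contra! hno
  · exact hx (natEntry_eq_zero_of_step_inr hF hw h hno)
  · exact hx (natEntry_eq_zero_of_step_inl hF hz h hno)

lemma vertex_eq_of_natEntry_ne_zero (hF : F ∈ homModule k w z) {x : ℕ × ℕ}
    (hx : natEntry F x.2 x.1 ≠ 0) : w.v x.1 = z.v x.2 := by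
  obtain ⟨hj, hi⟩ := natEntry_ne_zero hx
  by_contra hne
  have h := congrFun (congrFun (hF.1 (w.v x.1)) ⟨x.2, hj⟩) ⟨x.1, hi⟩
  simp only [projM, Matrix.mul_diagonal, Matrix.diagonal_mul, if_true, mul_one,
    if_neg (Ne.symm hne), zero_mul] at h
  exact hx (by rw [natEntry, dif_pos ⟨hj, hi⟩]; exact h)

end Entries

/-! ### Segments of the grid -/

/-- Diagonal (`rev = false`) and antidiagonal (`rev = true`) segments of the grid,
parametrised as the supports of `canonMat`. -/
structure Segment where
  i₁ : ℕ
  i₂ : ℕ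
  d : ℕ
  rev : Bool

namespace Segment

def snd (S : Segment) (i : ℕ) : ℕ :=
  if S.rev then S.i₂ + S.d - (i - S.i₁) else S.i₂ + (i - S.i₁)

def support (S : Segment) : Set (ℕ × ℕ) :=
  {x | S.i₁ ≤ x.1 ∧ x.1 ≤ S.i₁ + S.d ∧ x.2 = S.snd x.1}

def base (S : Segment) : ℕ × ℕ := (S.i₁, S.snd S.i₁)

variable {S T : Segment} {x y : ℕ × ℕ}

lemma mk_mem_support {i : ℕ} (h₁ : S.i₁ ≤ i) (h₂ : i ≤ S.i₁ + S.d) :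
    (i, S.snd i) ∈ S.support :=
  ⟨h₁, h₂, rfl⟩

lemma base_mem : S.base ∈ S.support := mk_mem_support le_rfl (Nat.le_add_right _ _)

lemma snd_mem_of_mem (hx : x ∈ S.support) : S.i₂ ≤ x.2 ∧ x.2 ≤ S.i₂ + S.d := by
  obtain ⟨h₁, h₂, h₃⟩ := hx
  rw [h₃, snd]
  split <;> omega

lemma eq_of_mem_of_fst_eq (hx : x ∈ S.support) (hy : y ∈ S.support) (h : x.1 = y.1) :
    x = y :=
  Prod.ext h (by rw [hx.2.2, hy.2.2, h])

lemma exists_mem_of_snd {j : ℕ} (hj : S.i₂ ≤ j ∧ j ≤ S.i₂ + S.d) :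
    ∃ x ∈ S.support, x.2 = j := by
  refine ⟨(if S.rev then S.i₁ + (S.i₂ + S.d - j) else S.i₁ + (j - S.i₂), j), ?_, rfl⟩
  rcases S with ⟨i₁, i₂, d, _ | _⟩ <;>
    simp only [support, snd, Set.mem_ofPred_eq, if_true, Bool.false_eq_true, if_false] at hj ⊢ <;>
    omega

lemma fst_adj_of_snd_adj (hx : x ∈ S.support) (hy : y ∈ S.support)
    (h : y.2 = x.2 + 1 ∨ x.2 = y.2 + 1) : y.1 = x.1 + 1 ∨ x.1 = y.1 + 1 := by
  obtain ⟨hx₁, hx₂, hx₃⟩ := hx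
  obtain ⟨hy₁, hy₂, hy₃⟩ := hy
  rcases S with ⟨i₁, i₂, d, _ | _⟩ <;>
    simp only [snd, if_true, Bool.false_eq_true, if_false] at * <;> omega

lemma eq_of_support_eq (hS : S.d = 0 → S.rev = false) (hT : T.d = 0 → T.rev = false)
    (h : S.support = T.support) : S = T := by
  have h₁ : S.base ∈ T.support := h ▸ S.base_mem
  have h₂ : (S.i₁ + S.d, S.snd (S.i₁ + S.d)) ∈ T.support :=
    h ▸ mk_mem_support (Nat.le_add_right _ _) le_rfl
  have h₃ : T.base ∈ S.support := h ▸ T.base_mem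
  have h₄ : (T.i₁ + T.d, T.snd (T.i₁ + T.d)) ∈ S.support :=
    h ▸ mk_mem_support (Nat.le_add_right _ _) le_rfl
  clear h
  rcases S with ⟨a, b, d, _ | _⟩ <;> rcases T with ⟨a', b', d', _ | _⟩ <;>
    simp only [support, snd, base, Set.mem_ofPred_eq, mk.injEq, if_true, Bool.false_eq_true,
      if_false, Bool.true_eq_false, and_true, and_false, imp_false] at h₁ h₂ h₃ h₄ hS hT ⊢
  all_goals omega

lemma exists_support_eq_insert (hS : S.d = 0 → S.rev = false) (hx : x ∈ S.support)
    (h₁ : ¬ (S.i₁ ≤ y.1 ∧ y.1 ≤ S.i₁ + S.d)) (h₂ : ¬ (S.i₂ ≤ y.2 ∧ y.2 ≤ S.i₂ + S.d))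
    (ha₁ : y.1 = x.1 + 1 ∨ x.1 = y.1 + 1) (ha₂ : y.2 = x.2 + 1 ∨ x.2 = y.2 + 1) :
    ∃ T : Segment, T.support = insert y S.support ∧ T.d = S.d + 1 ∧
      T.i₁ + T.d = max (S.i₁ + S.d) y.1 ∧ T.i₂ + T.d = max (S.i₂ + S.d) y.2 := by
  obtain ⟨x₁, x₂⟩ := x
  obtain ⟨y₁, y₂⟩ := y
  have hx₂ := snd_mem_of_mem hx
  obtain ⟨hx₁, hx₁', hx₃⟩ := hx
  -- `rev` records whether the step from `x` to `y` is antidiagonal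
  refine ⟨⟨min S.i₁ y₁, min S.i₂ y₂, S.d + 1,
    if y₁ < x₁ then decide (x₂ < y₂) else decide (y₂ < x₂)⟩, ?_, rfl, ?_, ?_⟩
  · ext ⟨a, b⟩
    rcases S with ⟨i₁, i₂, d, _ | _⟩ <;>
      simp only [support, snd, Set.mem_ofPred_eq, Set.mem_insert_iff, Prod.mk.injEq, if_true,
        Bool.false_eq_true, if_false] at * <;>
      simp only [min_def] <;> split_ifs <;> simp only [decide_eq_true_eq] at * <;> omega
  all_goals dsimp only; simp only [min_def, max_def]; split_ifs <;> omega

section Matching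

open Walk

variable {Q : QuiverData} {w z : Q.Walk} {S T : Segment} {x y : ℕ × ℕ}

structure IsMatching (w z : Q.Walk) (S : Segment) : Prop where
  le_w : S.i₁ + S.d ≤ w.n
  le_z : S.i₂ + S.d ≤ z.n
  rev_eq_false : S.d = 0 → S.rev = false
  vertex_eq : ∀ x ∈ S.support, w.v x.1 = z.v x.2
  jointStep : ∀ x ∈ S.support, ∀ y ∈ S.support, y.1 = x.1 + 1 → JointStep w z x y

def IsClosed (w z : Q.Walk) (S : Segment) : Prop :=
  ∀ x ∈ S.support, ∀ y, JointStep w z x y → y ∈ S.support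

lemma IsMatching.jointStep_of_adj (hS : S.IsMatching w z) (hx : x ∈ S.support)
    (hy : y ∈ S.support) (h : y.1 = x.1 + 1 ∨ x.1 = y.1 + 1) : JointStep w z x y := by
  rcases h with h | h
  exacts [hS.jointStep x hx y hy h, (hS.jointStep y hy x hx h).symm]

lemma IsMatching.mem_of_jointStep_of_fst (hS : S.IsMatching w z) (hz : z.IsReduced)
    (hx : x ∈ S.support) (hxy : JointStep w z x y) (h : S.i₁ ≤ y.1 ∧ y.1 ≤ S.i₁ + S.d) :
    y ∈ S.support := by
  obtain ⟨l, hl, -⟩ := id hxy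
  have hy' := mk_mem_support (S := S) h.1 h.2
  rwa [hxy.eq_of_fst_eq hz (hS.jointStep_of_adj hx hy' hl.adj) rfl]

lemma IsMatching.mem_of_jointStep_of_snd (hS : S.IsMatching w z) (hw : w.IsReduced)
    (hx : x ∈ S.support) (hxy : JointStep w z x y) (h : S.i₂ ≤ y.2 ∧ y.2 ≤ S.i₂ + S.d) :
    y ∈ S.support := by
  obtain ⟨l, -, hl⟩ := id hxy
  obtain ⟨y', hy', hy'₂⟩ := exists_mem_of_snd h
  have hadj := fst_adj_of_snd_adj hx hy' (hy'₂ ▸ hl.adj)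
  rwa [hxy.eq_of_snd_eq hw (hS.jointStep_of_adj hx hy' hadj) hy'₂.symm]

lemma IsMatching.support_subset (hS : S.IsMatching w z) (hT : T.IsClosed w z)
    (hx : x ∈ S.support) (hxT : x ∈ T.support) : S.support ⊆ T.support := by
  rintro ⟨i, j⟩ ⟨hi₁, hi₂, hj : j = S.snd i⟩
  subst hj
  refine Nat.forall_of_iff_succ (P := fun i => (i, S.snd i) ∈ T.support) hx.1 hx.2.1
    (by rwa [← hx.2.2]) (fun i h₁ h₂ => ?_) hi₁ hi₂
  have hstep := hS.jointStep _ (mk_mem_support h₁ h₂.le) _ (mk_mem_support (by omega) h₂) rfl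
  exact ⟨fun h => hT _ h _ hstep, fun h => hT _ h _ hstep.symm⟩

lemma IsMatching.of_support_eq_insert (hw : w.IsCoherent) (hz : z.IsCoherent)
    (hS : S.IsMatching w z) (hT : T.support = insert y S.support) (hTd : T.d ≠ 0)
    (hTw : T.i₁ + T.d ≤ w.n) (hTz : T.i₂ + T.d ≤ z.n) (hx : x ∈ S.support)
    (hxy : JointStep w z x y) (hy : ¬ (S.i₁ ≤ y.1 ∧ y.1 ≤ S.i₁ + S.d)) :
    T.IsMatching w z where
  le_w := hTw
  le_z := hTz
  rev_eq_false h := absurd h hTd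
  vertex_eq := by
    rw [hT]
    rintro x' (rfl | hx')
    exacts [hxy.vertex_eq hw hz, hS.vertex_eq x' hx']
  jointStep := by
    obtain ⟨l, hl, -⟩ := id hxy
    have hxy₁ := hl.adj
    have honly : ∀ x' ∈ S.support, x'.1 = y.1 + 1 ∨ y.1 = x'.1 + 1 → x' = x := by
      intro x' hx' h
      have := hx.1; have := hx.2.1; have := hx'.1; have := hx'.2.1
      exact eq_of_mem_of_fst_eq hx' hx (by omega)
    rw [hT]
    rintro a (rfl | ha) b (rfl | hb) hab
    · omega
    · rw [honly b hb (Or.inl hab)]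
      exact hxy.symm
    · rw [honly a ha (Or.inr hab)]
      exact hxy
    · exact hS.jointStep a ha b hb hab

lemma IsMatching.exists_longer (hwr : w.IsReduced) (hzr : z.IsReduced) (hwc : w.IsCoherent)
    (hzc : z.IsCoherent) (hS : S.IsMatching w z) (hx : x ∈ S.support)
    (hxy : JointStep w z x y) (hy : y ∉ S.support) :
    ∃ T : Segment, T.IsMatching w z ∧ S.support ⊆ T.support ∧ T.d = S.d + 1 := by
  have h₁ : ¬ (S.i₁ ≤ y.1 ∧ y.1 ≤ S.i₁ + S.d) :=
    fun h => hy (hS.mem_of_jointStep_of_fst hzr hx hxy h)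
  have h₂ : ¬ (S.i₂ ≤ y.2 ∧ y.2 ≤ S.i₂ + S.d) :=
    fun h => hy (hS.mem_of_jointStep_of_snd hwr hx hxy h)
  obtain ⟨l, hwl, hzl⟩ := id hxy
  obtain ⟨T, hT, hTd, hTw, hTz⟩ :=
    exists_support_eq_insert hS.rev_eq_false hx h₁ h₂ hwl.adj hzl.adj
  refine ⟨T, hS.of_support_eq_insert hwc hzc hT (by omega) ?_ ?_ hx hxy h₁,
    hT ▸ Set.subset_insert _ _, hTd⟩
  · rw [hTw]; exact max_le hS.le_w hwl.le.2
  · rw [hTz]; exact max_le hS.le_z hzl.le.2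

lemma IsClosed.fst_mem_of_step_inr (hc : S.IsClosed w z) (hx : x ∈ S.support)
    (hsat : SaturatedAt w z x) {e : Q.E} {i' : ℕ} (h : w.Step x.1 (Sum.inr e) i') :
    S.i₁ ≤ i' ∧ i' ≤ S.i₁ + S.d := by
  obtain ⟨j', hj'⟩ := hsat.1 e i' h
  obtain ⟨h₁, h₂, -⟩ := hc x hx (i', j') ⟨_, h, hj'⟩
  exact ⟨h₁, h₂⟩

lemma IsClosed.snd_mem_of_step_inl (hc : S.IsClosed w z) (hx : x ∈ S.support)
    (hsat : SaturatedAt w z x) {e : Q.E} {j' : ℕ} (h : z.Step x.2 (Sum.inl e) j') :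
    S.i₂ ≤ j' ∧ j' ≤ S.i₂ + S.d := by
  obtain ⟨i', hi'⟩ := hsat.2 e j' h
  exact snd_mem_of_mem (hc x hx (i', j') ⟨_, hi', h⟩)

lemma IsMatching.matchCondition (hS : S.IsMatching w z) :
    if S.rev then
      (∀ p ≤ S.d, w.v (S.i₁ + p) = z.v (S.i₂ + S.d - p)) ∧
        ∀ p < S.d, w.a (S.i₁ + p) = Q.linv (z.a (S.i₂ + S.d - 1 - p))
    else
      (∀ p ≤ S.d, w.v (S.i₁ + p) = z.v (S.i₂ + p)) ∧
        ∀ p < S.d, w.a (S.i₁ + p) = z.a (S.i₂ + p) := by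
  have hv (p) (hp : p ≤ S.d) := hS.vertex_eq _ (mk_mem_support (S := S) (i := S.i₁ + p)
    (Nat.le_add_right _ _) (by omega))
  have ha (p) (hp : p < S.d) := hS.jointStep _ (mk_mem_support (S := S) (i := S.i₁ + p)
    (Nat.le_add_right _ _) (by omega)) _ (mk_mem_support (i := S.i₁ + p + 1) (by omega)
    (by omega)) rfl
  have hle := hS.le_z
  rcases S with ⟨i₁, i₂, d, _ | _⟩ <;>
    simp only [snd, if_true, Bool.false_eq_true, if_false, Nat.add_sub_cancel_left] at hv ha hle ⊢
  · refine ⟨hv, fun p hp => ?_⟩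
    obtain ⟨l, hwl, hzl⟩ := ha p hp
    rw [show i₁ + p + 1 - i₁ = p + 1 by omega, ← add_assoc] at hzl
    rw [(step_succ_iff.1 hwl).2, (step_succ_iff.1 hzl).2]
  · refine ⟨hv, fun p hp => ?_⟩
    obtain ⟨l, hwl, hzl⟩ := ha p hp
    rw [show i₁ + p + 1 - i₁ = p + 1 by omega, show i₂ + d - p = i₂ + d - 1 - p + 1 by omega,
      show i₂ + d - (p + 1) = i₂ + d - 1 - p by omega] at hzl
    rw [(step_succ_iff.1 hwl).2, (succ_step_iff.1 hzl).2, linv_linv]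

lemma IsClosed.factor_conditions (hS : S.IsMatching w z) (hc : S.IsClosed w z)
    (hsat : ∀ x ∈ S.support, SaturatedAt w z x) :
    (S.i₁ = 0 ∨ ∃ e, w.a (S.i₁ - 1) = Sum.inr e) ∧
      (S.i₁ + S.d = w.n ∨ ∃ e, w.a (S.i₁ + S.d) = Sum.inl e) := by
  have hlast := mk_mem_support (S := S) (Nat.le_add_right _ _) le_rfl
  constructor
  · rcases Nat.eq_zero_or_pos S.i₁ with h | h
    · exact Or.inl h
    rcases ha : w.a (S.i₁ - 1) with e | e
    · have hstep : w.Step (S.i₁ - 1 + 1) (Sum.inr e) (S.i₁ - 1) :=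
        succ_step_iff.2 ⟨by have := hS.le_w; omega, ha⟩
      rw [Nat.sub_add_cancel h] at hstep
      have := hc.fst_mem_of_step_inr base_mem (hsat _ base_mem) hstep
      omega
    · exact Or.inr ⟨e, rfl⟩
  · rcases hS.le_w.eq_or_lt with h | h
    · exact Or.inl h
    rcases ha : w.a (S.i₁ + S.d) with e | e
    · exact Or.inr ⟨e, rfl⟩
    · have := hc.fst_mem_of_step_inr hlast (hsat _ hlast) (step_succ_iff.2 ⟨h, ha⟩)
      omega

lemma IsClosed.sub_conditions (hS : S.IsMatching w z) (hc : S.IsClosed w z)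
    (hsat : ∀ x ∈ S.support, SaturatedAt w z x) :
    (S.i₂ = 0 ∨ ∃ e, z.a (S.i₂ - 1) = Sum.inl e) ∧
      (S.i₂ + S.d = z.n ∨ ∃ e, z.a (S.i₂ + S.d) = Sum.inr e) := by
  constructor
  · rcases Nat.eq_zero_or_pos S.i₂ with h | h
    · exact Or.inl h
    rcases ha : z.a (S.i₂ - 1) with e | e
    · exact Or.inr ⟨e, rfl⟩
    · obtain ⟨x, hx, hx₂⟩ := exists_mem_of_snd (S := S) ⟨le_rfl, Nat.le_add_right _ _⟩
      have hstep : z.Step (S.i₂ - 1 + 1) (Sum.inl e) (S.i₂ - 1) :=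
        succ_step_iff.2 ⟨by have := hS.le_z; omega, ha⟩
      rw [Nat.sub_add_cancel h, ← hx₂] at hstep
      have := hc.snd_mem_of_step_inl hx (hsat x hx) hstep
      omega
  · rcases hS.le_z.eq_or_lt with h | h
    · exact Or.inl h
    rcases ha : z.a (S.i₂ + S.d) with e | e
    · obtain ⟨x, hx, hx₂⟩ := exists_mem_of_snd (S := S) ⟨Nat.le_add_right _ _, le_rfl⟩
      have hstep : z.Step (S.i₂ + S.d) (Sum.inl e) (S.i₂ + S.d + 1) := step_succ_iff.2 ⟨h, ha⟩
      rw [← hx₂] at hstep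
      have := hc.snd_mem_of_step_inl hx (hsat x hx) hstep
      omega
    · exact Or.inr ⟨e, rfl⟩

end Matching

end Segment

/-! ### Admissible pairs and their canonical maps -/

namespace AdmPair

open Walk Segment

variable {Q : QuiverData} {w z : Q.Walk} (P : AdmPair Q w z) {x : ℕ × ℕ}

def toSegment : Segment := ⟨P.i₁, P.i₂, P.d, P.rev⟩

lemma toSegment_injective : Function.Injective (toSegment (w := w) (z := z)) := by
  rintro ⟨⟩ ⟨⟩ h
  simp only [toSegment, Segment.mk.injEq] at h
  obtain ⟨rfl, rfl, rfl, rfl⟩ := h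
  rfl

instance : Finite (AdmPair Q w z) :=
  Finite.of_injective
    (fun P : AdmPair Q w z => ((⟨P.i₁, by have := P.hw; omega⟩ : Fin (w.n + 1)),
      (⟨P.i₂, by have := P.hz; omega⟩ : Fin (z.n + 1)),
      (⟨P.d, by have := P.hw; omega⟩ : Fin (w.n + 1)), P.rev))
    fun P P' h => toSegment_injective (by
      simp only [Prod.mk.injEq, Fin.mk.injEq] at h
      simp only [toSegment, h])

lemma isMatching : P.toSegment.IsMatching w z := by
  obtain ⟨i₁, i₂, d, rev, hw, hz, -, -, -, -, hm, hnd⟩ := P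
  refine ⟨hw, hz, hnd, ?_, ?_⟩
  · rintro ⟨i, j⟩ ⟨h₁, h₂, hj : j = _⟩
    cases rev <;>
      simp only [toSegment, snd, if_true, Bool.false_eq_true, if_false] at hm h₁ h₂ hj ⊢ <;>
      subst hj <;>
      simpa only [Nat.add_sub_cancel' h₁] using hm.1 (i - i₁) (by omega)
  · rintro ⟨i, j⟩ ⟨h₁, h₂, hj : j = _⟩ ⟨i', j'⟩ ⟨-, h₂', hj' : j' = _⟩ (rfl : i' = i + 1)
    refine ⟨w.a i, step_succ_iff.2 ⟨by simp only [toSegment] at h₂'; omega, rfl⟩, ?_⟩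
    cases rev <;>
      simp only [toSegment, snd, if_true, Bool.false_eq_true, if_false] at hm h₁ h₂ h₂' hj hj' ⊢ <;>
      subst hj hj' <;>
      have ha := hm.2 (i - i₁) (by omega) <;>
      rw [Nat.add_sub_cancel' h₁] at ha
    · rw [show i₂ + (i + 1 - i₁) = i₂ + (i - i₁) + 1 by omega, ha]
      exact step_succ_iff.2 ⟨by omega, rfl⟩
    · rw [show i₂ + d - (i - i₁) = i₂ + d - 1 - (i - i₁) + 1 by omega,
        show i₂ + d - (i + 1 - i₁) = i₂ + d - 1 - (i - i₁) by omega, ha]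
      exact succ_step_iff.2 ⟨by omega, (linv_linv _).symm⟩

lemma exists_inl_of_step_outside_fst (hx : x ∈ P.toSegment.support) {l : Q.Letter}
    {i' : ℕ} (h : w.Step x.1 l i') (hi' : ¬ (P.i₁ ≤ i' ∧ i' ≤ P.i₁ + P.d)) :
    ∃ e, l = Sum.inl e := by
  obtain ⟨hx₁, hx₂, -⟩ := hx
  simp only [toSegment] at hx₁ hx₂
  rcases h.adj with rfl | hx
  · rcases P.factorRight with hn | ⟨e, he⟩
    · have := h.le; omega
    · rw [show x.1 = P.i₁ + P.d by omega] at h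
      exact ⟨e, ((step_succ_iff.1 h).2).symm.trans he⟩
  · rcases P.factorLeft with hn | ⟨e, he⟩
    · omega
    · rw [hx, succ_step_iff, show i' = P.i₁ - 1 by omega, he] at h
      exact ⟨e, by rw [← linv_linv l, ← h.2]; rfl⟩

lemma exists_inr_of_step_outside_snd (hx : x ∈ P.toSegment.support) {l : Q.Letter}
    {j' : ℕ} (h : z.Step x.2 l j') (hj' : ¬ (P.i₂ ≤ j' ∧ j' ≤ P.i₂ + P.d)) :
    ∃ e, l = Sum.inr e := by
  obtain ⟨hx₁, hx₂⟩ := snd_mem_of_mem hx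
  simp only [toSegment] at hx₁ hx₂
  rcases h.adj with rfl | hx
  · rcases P.subRight with hn | ⟨e, he⟩
    · have := h.le; omega
    · rw [show x.2 = P.i₂ + P.d by omega] at h
      exact ⟨e, ((step_succ_iff.1 h).2).symm.trans he⟩
  · rcases P.subLeft with hn | ⟨e, he⟩
    · omega
    · rw [hx, succ_step_iff, show j' = P.i₂ - 1 by omega, he] at h
      exact ⟨e, by rw [← linv_linv l, ← h.2]; rfl⟩

lemma saturatedAt (hx : x ∈ P.toSegment.support) : SaturatedAt w z x := by
  refine ⟨fun e i' h => ?_, fun e j' h => ?_⟩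
  · by_cases hi' : P.i₁ ≤ i' ∧ i' ≤ P.i₁ + P.d
    · obtain ⟨l, hwl, hzl⟩ :=
        P.isMatching.jointStep_of_adj hx (mk_mem_support hi'.1 hi'.2) h.adj
      exact ⟨_, hwl.letter_eq h ▸ hzl⟩
    · obtain ⟨e', he'⟩ := P.exists_inl_of_step_outside_fst hx h hi'
      cases he'
  · by_cases hj' : P.i₂ ≤ j' ∧ j' ≤ P.i₂ + P.d
    · obtain ⟨y, hy, rfl⟩ := exists_mem_of_snd (S := P.toSegment) hj'
      obtain ⟨l, hwl, hzl⟩ :=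
        P.isMatching.jointStep_of_adj hx hy (fst_adj_of_snd_adj hx hy h.adj)
      exact ⟨_, hzl.letter_eq h ▸ hwl⟩
    · obtain ⟨e', he'⟩ := P.exists_inr_of_step_outside_snd hx h hj'
      cases he'

lemma isClosed (hw : w.IsReduced) (hz : z.IsReduced) : P.toSegment.IsClosed w z := by
  intro x hx y hxy
  by_cases h₁ : P.i₁ ≤ y.1 ∧ y.1 ≤ P.i₁ + P.d
  · exact P.isMatching.mem_of_jointStep_of_fst hz hx hxy h₁
  by_cases h₂ : P.i₂ ≤ y.2 ∧ y.2 ≤ P.i₂ + P.d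
  · exact P.isMatching.mem_of_jointStep_of_snd hw hx hxy h₂
  obtain ⟨l, hwl, hzl⟩ := hxy
  obtain ⟨e, rfl⟩ := P.exists_inl_of_step_outside_fst hx hwl h₁
  obtain ⟨e', he'⟩ := P.exists_inr_of_step_outside_snd hx hzl h₂
  cases he'

lemma eq_of_mem_support (hw : w.IsReduced) (hz : z.IsReduced) {P P' : AdmPair Q w z}
    (h : x ∈ P.toSegment.support) (h' : x ∈ P'.toSegment.support) : P = P' :=
  toSegment_injective <| eq_of_support_eq P.nodup P'.nodup <| subset_antisymm
    (P.isMatching.support_subset (P'.isClosed hw hz) h h')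
    (P'.isMatching.support_subset (P.isClosed hw hz) h' h)

end AdmPair

section Canonical

open Walk Segment

variable {Q : QuiverData} {k : Type} [Field k] {w z : Q.Walk}

lemma natEntry_canonMat (P : AdmPair Q w z) (j i : ℕ) :
    natEntry (canonMat k P) j i = P.toSegment.support.indicator 1 (i, j) := by
  unfold natEntry
  split_ifs with h
  · by_cases hm : (i, j) ∈ P.toSegment.support
    · rw [Set.indicator_of_mem hm]
      exact if_pos hm
    · rw [Set.indicator_of_notMem hm]
      exact if_neg hm
  · refine (Set.indicator_of_notMem (fun hm => h ⟨?_, ?_⟩) _).symm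
    · have := snd_mem_of_mem hm; have := P.hz; simp only [AdmPair.toSegment] at *; omega
    · have := hm.2.1; have := P.hw; simp only [AdmPair.toSegment] at *; omega

lemma AdmPair.exists_step_inl_iff (hw : w.IsReduced) (hz : z.IsReduced) (P : AdmPair Q w z)
    {e : Q.E} {i j : ℕ} :
    (∃ i', w.Step i (Sum.inl e) i' ∧ (i', j) ∈ P.toSegment.support) ↔
      ∃ j', z.Step j (Sum.inr e) j' ∧ (i, j') ∈ P.toSegment.support := by
  constructor
  · rintro ⟨i', hi', hmem⟩
    obtain ⟨j', hj'⟩ := (P.saturatedAt hmem).1 e i hi'.reverse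
    exact ⟨j', hj', P.isClosed hw hz _ hmem (i, j') ⟨_, hi'.reverse, hj'⟩⟩
  · rintro ⟨j', hj', hmem⟩
    obtain ⟨i', hi'⟩ := (P.saturatedAt hmem).2 e j hj'.reverse
    exact ⟨i', hi', P.isClosed hw hz _ hmem (i', j) ⟨_, hi', hj'.reverse⟩⟩

theorem linearIndependent_canonMat (hwr : w.IsReduced) (hzr : z.IsReduced) :
    LinearIndependent k (fun P : AdmPair Q w z => canonMat k P) := by
  rw [linearIndependent_iff']
  intro s g hsum P hPs
  have hb₁ : P.toSegment.base.1 < w.n + 1 := by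
    have := P.hw; simp only [base, AdmPair.toSegment]; omega
  have hb₂ : P.toSegment.base.2 < z.n + 1 := by
    have := (snd_mem_of_mem (S := P.toSegment) base_mem).2; have := P.hz
    simp only [AdmPair.toSegment] at *; omega
  have h := congrFun (congrFun hsum ⟨_, hb₂⟩) ⟨_, hb₁⟩
  simp only [Matrix.sum_apply, Matrix.smul_apply, smul_eq_mul, Matrix.zero_apply,
    ← natEntry_fin (canonMat k _), natEntry_canonMat] at h
  rw [Finset.sum_eq_single P, Set.indicator_of_mem base_mem, Pi.one_apply, mul_one] at h
  · exact h
  · intro P' _ hne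
    rw [Set.indicator_of_notMem fun h' => hne (AdmPair.eq_of_mem_support hwr hzr h' base_mem),
      mul_zero]
  · exact fun h => absurd hPs h

variable [DecidableEq Q.E] [DecidableEq Q.V]

open Classical in
theorem canonMat_mem (hw : w.IsReduced) (hz : z.IsReduced) (P : AdmPair Q w z) :
    canonMat k P ∈ homModule k w z := by
  refine ⟨fun v => ?_, fun e => ?_⟩
  · ext j i
    simp only [projM, Matrix.mul_diagonal, Matrix.diagonal_mul]
    rw [← natEntry_fin (canonMat k P), natEntry_canonMat]
    by_cases hm : ((i : ℕ), (j : ℕ)) ∈ P.toSegment.support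
    · have hv : w.v i = z.v j := P.isMatching.vertex_eq _ hm
      rw [hv, mul_comm]
    · simp [Set.indicator_of_notMem hm]
  · ext j i
    simp only [mul_actM_apply, actM_mul_apply, natEntry_canonMat, Set.indicator_apply,
      Pi.one_apply]
    rw [hw.sum_ite_step_ite (fun i' => (i', (j : ℕ)) ∈ P.toSegment.support),
      hz.sum_ite_step_ite (fun j' => ((i : ℕ), j') ∈ P.toSegment.support)]
    exact if_congr (P.exists_step_inl_iff hw hz) rfl rfl

/-! ### Every homomorphism is a combination of canonical maps -/

variable {F : Matrix (Fin (z.n + 1)) (Fin (w.n + 1)) k}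

lemma Segment.IsMatching.natEntry_eq_base (hF : F ∈ homModule k w z) (hw : w.IsReduced)
    (hz : z.IsReduced) {S : Segment} (hS : S.IsMatching w z) {x : ℕ × ℕ}
    (hx : x ∈ S.support) : natEntry F x.2 x.1 = natEntry F S.base.2 S.base.1 := by
  obtain ⟨i, j⟩ := x
  obtain ⟨h₁, h₂, hj : j = S.snd i⟩ := hx
  subst hj
  refine Nat.forall_of_iff_succ
    (P := fun i => natEntry F (S.snd i) i = natEntry F (S.snd S.i₁) S.i₁)
    le_rfl (Nat.le_add_right _ _) rfl (fun i h₁ h₂ => ?_) h₁ h₂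
  rw [natEntry_eq_of_jointStep hF hw hz (hS.jointStep _ (mk_mem_support h₁ h₂.le) _
    (mk_mem_support (by omega) h₂) rfl)]

lemma exists_isClosed_mem (hF : F ∈ homModule k w z) (hwr : w.IsReduced) (hzr : z.IsReduced)
    (hwc : w.IsCoherent) (hzc : z.IsCoherent) {x₀ : ℕ × ℕ} (hx₀ : natEntry F x₀.2 x₀.1 ≠ 0) :
    ∃ S : Segment, S.IsMatching w z ∧ S.IsClosed w z ∧ x₀ ∈ S.support := by
  classical
  -- a longest matching segment through `x₀` is closed
  let Len (d : ℕ) : Prop := ∃ S : Segment, S.IsMatching w z ∧ x₀ ∈ S.support ∧ S.d = d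
  have hlen₀ : Len 0 := by
    obtain ⟨hj, hi⟩ := natEntry_ne_zero hx₀
    have hmem : ∀ x ∈ (⟨x₀.1, x₀.2, 0, false⟩ : Segment).support, x = x₀ := by
      rintro ⟨a, b⟩ hx
      simp only [support, snd, Set.mem_ofPred_eq, Bool.false_eq_true, if_false] at hx
      ext <;> dsimp only <;> omega
    refine ⟨⟨x₀.1, x₀.2, 0, false⟩, ⟨by simpa using hi, by simpa using hj, fun _ => rfl,
      fun x hx => ?_, fun x hx y hy h => ?_⟩, ⟨le_rfl, le_rfl, by simp [snd]⟩, rfl⟩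
    · rw [hmem x hx]
      exact vertex_eq_of_natEntry_ne_zero hF hx₀
    · rw [hmem x hx, hmem y hy] at h
      omega
  have hbound (d : ℕ) : Len d → d ≤ w.n := fun ⟨S, hS, _, hd⟩ => hd ▸ by have := hS.le_w; omega
  obtain ⟨S, hS, hx₀S, hd⟩ := Nat.findGreatest_spec (P := Len) (n := w.n) (Nat.zero_le _) hlen₀
  refine ⟨S, hS, fun x hx y hxy => ?_, hx₀S⟩
  by_contra hy
  obtain ⟨T, hT, hST, hTd⟩ := hS.exists_longer hwr hzr hwc hzc hx hxy hy
  have hT' : Len T.d := ⟨T, hT, hST hx₀S, rfl⟩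
  have := Nat.le_findGreatest (hbound _ hT') hT'
  omega

lemma exists_admPair_mem (hF : F ∈ homModule k w z) (hwr : w.IsReduced) (hzr : z.IsReduced)
    (hwc : w.IsCoherent) (hzc : z.IsCoherent) {x₀ : ℕ × ℕ} (hx₀ : natEntry F x₀.2 x₀.1 ≠ 0) :
    ∃ P : AdmPair Q w z, x₀ ∈ P.toSegment.support := by
  obtain ⟨S, hS, hc, hx₀S⟩ := exists_isClosed_mem hF hwr hzr hwc hzc hx₀
  have hsat (x) (hx : x ∈ S.support) : SaturatedAt w z x :=
    saturatedAt_of_natEntry_ne_zero hF hwr hzr <| by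
      rwa [hS.natEntry_eq_base hF hwr hzr hx, ← hS.natEntry_eq_base hF hwr hzr hx₀S]
  obtain ⟨fl, fr⟩ := hc.factor_conditions hS hsat
  obtain ⟨sl, sr⟩ := hc.sub_conditions hS hsat
  exact ⟨⟨S.i₁, S.i₂, S.d, S.rev, hS.le_w, hS.le_z, fl, fr, sl, sr, hS.matchCondition,
    hS.rev_eq_false⟩, hx₀S⟩

theorem eq_sum_canonMat [Fintype (AdmPair Q w z)] (hF : F ∈ homModule k w z)
    (hwr : w.IsReduced) (hzr : z.IsReduced) (hwc : w.IsCoherent) (hzc : z.IsCoherent) :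
    F = ∑ P : AdmPair Q w z,
      natEntry F P.toSegment.base.2 P.toSegment.base.1 • canonMat k P := by
  ext j i
  simp only [Matrix.sum_apply, Matrix.smul_apply, smul_eq_mul, ← natEntry_fin (canonMat k _),
    natEntry_canonMat, ← natEntry_fin F]
  by_cases h : ∃ P : AdmPair Q w z, ((i : ℕ), (j : ℕ)) ∈ P.toSegment.support
  · obtain ⟨P, hP⟩ := h
    rw [Finset.sum_eq_single P, Set.indicator_of_mem hP, Pi.one_apply, mul_one,
      P.isMatching.natEntry_eq_base hF hwr hzr hP]
    · intro P' _ hne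
      rw [Set.indicator_of_notMem fun h' => hne (AdmPair.eq_of_mem_support hwr hzr h' hP),
        mul_zero]
    · simp
  · push Not at h
    rw [Finset.sum_eq_zero fun P _ => by rw [Set.indicator_of_notMem (h P), mul_zero]]
    by_contra hne
    obtain ⟨P, hP⟩ := exists_admPair_mem hF hwr hzr hwc hzc (x₀ := ((i : ℕ), (j : ℕ))) hne
    exact h P hP

theorem span_canonMat (hwr : w.IsReduced) (hzr : z.IsReduced) (hwc : w.IsCoherent)
    (hzc : z.IsCoherent) :
    Submodule.span k (Set.range fun P : AdmPair Q w z => canonMat k P) = homModule k w z := by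
  refine le_antisymm (Submodule.span_le.2 (Set.range_subset_iff.2 (canonMat_mem hwr hzr)))
    fun F hF => ?_
  have := Fintype.ofFinite (AdmPair Q w z)
  rw [eq_sum_canonMat hF hwr hzr hwc hzc]
  exact Submodule.sum_mem _ fun P _ => Submodule.smul_mem _ _ (Submodule.subset_span ⟨P, rfl⟩)

end Canonical

end QuiverData

open QuiverData

theorem crawley_boevey_hom_basis_general
    (Q : QuiverData) [DecidableEq Q.E] [DecidableEq Q.V]
    (k : Type) [Field k]
    (Irel : List Q.E → Prop)
    (w z : Q.Walk) (hw : w.IsString Irel) (hz : z.IsString Irel) :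
    (∀ P : AdmPair Q w z, canonMat k P ∈ homModule k w z) ∧
    LinearIndependent k (fun P : AdmPair Q w z => canonMat k P) ∧
    Submodule.span k (Set.range fun P : AdmPair Q w z => canonMat k P) =
      homModule k w z := by
  obtain ⟨hwc, hwr, -⟩ := hw
  obtain ⟨hzc, hzr, -⟩ := hz
  exact ⟨canonMat_mem hwr hzr, linearIndependent_canonMat hwr hzr,
    span_canonMat hwr hzr hwc hzc⟩

/-- Crawley-Boevey: for a string algebra `A = kQ/I` and strings `w`, `z`,
the canonical homomorphisms `f_a` indexed by the admissible pairs in `F(w) × S(z)` form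
a `k`-basis of `Hom_A(M(w), M(z))`. -/
theorem crawley_boevey_hom_basis
    (Q : QuiverData) [Fintype Q.V] [Fintype Q.E] [DecidableEq Q.E] [DecidableEq Q.V]
    (k : Type) [Field k]
    (Irel : List Q.E → Prop)
    (hIpath : ∀ ρ, Irel ρ → Q.IsPath ρ ∧ 2 ≤ ρ.length)
    (hadm : ∃ N, ∀ ρ : List Q.E, Q.IsPath ρ → N ≤ ρ.length → ∃ σ, σ <:+: ρ ∧ Irel σ)
    (hS1s : ∀ x : Q.V, ∀ e₁ e₂ e₃ : Q.E, Q.src e₁ = x → Q.src e₂ = x → Q.src e₃ = x →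
      e₁ = e₂ ∨ e₁ = e₃ ∨ e₂ = e₃)
    (hS1t : ∀ x : Q.V, ∀ e₁ e₂ e₃ : Q.E, Q.tgt e₁ = x → Q.tgt e₂ = x → Q.tgt e₃ = x →
      e₁ = e₂ ∨ e₁ = e₃ ∨ e₂ = e₃)
    (hS2l : ∀ α β β' : Q.E, Q.tgt α = Q.src β → Q.tgt α = Q.src β' →
      ¬ Irel [α, β] → ¬ Irel [α, β'] → β = β')
    (hS2r : ∀ α α' β : Q.E, Q.tgt α = Q.src β → Q.tgt α' = Q.src β →
      ¬ Irel [α, β] → ¬ Irel [α', β] → α = α')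
    (w z : Q.Walk) (hw : w.IsString Irel) (hz : z.IsString Irel) :
    (∀ P : AdmPair Q w z, canonMat k P ∈ homModule k w z) ∧
    LinearIndependent k (fun P : AdmPair Q w z => canonMat k P) ∧
    Submodule.span k (Set.range fun P : AdmPair Q w z => canonMat k P) =
      homModule k w z :=
  crawley_boevey_hom_basis_general Q k Irel w z hw hz
end

section
/- Let C be a triangulated category and D a full additive subcategory. If (X, μ⁻¹(X; D)) is a D-mutation pair in the sense of Iyama–Yoshino, with D ⊆ X ⊆ ^⊥(D[1]), then in the subfactor triangulated category ^⊥(D[1])/D the image of μ⁻¹(X; D) = (D * X[1]) ∩ ^⊥(D[1]) equals the image of X shifted by the induced shift functor ⟨1⟩: μ⁻¹(X; D)/D = (X/D)⟨1⟩. -/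
open CategoryTheory CategoryTheory.Limits CategoryTheory.Pretriangulated

variable {k : Type*} [Field k]
variable {C : Type*} [Category C] [Preadditive C] [Linear k C] [HasZeroObject C]
  [HasShift C ℤ] [∀ n : ℤ, (CategoryTheory.shiftFunctor C n).Additive] [Pretriangulated C]

def star (X Y : Set C) : Set C :=
  {Z | ∃ (A B : C) (_ : A ∈ X) (_ : B ∈ Y) (f : A ⟶ Z) (g : Z ⟶ B)
    (h : B ⟶ A⟦(1 : ℤ)⟧), Triangle.mk f g h ∈ distTriang C}

def shiftSet (S : Set C) (n : ℤ) : Set C :=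
  {Z | ∃ A ∈ S, Nonempty (Z ≅ A⟦n⟧)}

structure SubClosed [HasBinaryBiproducts C] (S : Set C) : Prop where
  iso : ∀ {A B : C}, (A ≅ B) → A ∈ S → B ∈ S
  sum : ∀ {A B : C}, A ∈ S → B ∈ S → (A ⊞ B) ∈ S
  summand : ∀ {A B : C}, (A ⊞ B) ∈ S → A ∈ S

/-- `f` factors through an object of `D`. -/
def QFactor (D : Set C) {A B : C} (f : A ⟶ B) : Prop :=
  ∃ D₀ ∈ D, ∃ u : A ⟶ D₀, ∃ v : D₀ ⟶ B, u ≫ v = f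

/-- `A` and `B` are isomorphic in the quotient category `C/D`. -/
def QIso (D : Set C) (A B : C) : Prop :=
  ∃ (u : A ⟶ B) (v : B ⟶ A), QFactor D (u ≫ v - 𝟙 A) ∧ QFactor D (v ≫ u - 𝟙 B)

/-!
An object `Z₀ ∈ ⊥(D[1])` lies in `D * X[1]` exactly when it is the cone of a morphism
`X' ⟶ A` with `X' ∈ X`, `A ∈ D`; since `Hom(Z₀, D[1]) = 0` that morphism is automatically a
left `D`-approximation, which gives one inclusion with `X'⟨1⟩ = Z₀`.

Conversely, let `X' → D_{X'} → W → X'[1]` define `W = X'⟨1⟩ ≅ Z₀` in `Z/D`, and let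
`Y' → D_Z → Z₀ → Y'[1]` be built on a right `D`-approximation of `Z₀`. Rigidity of `D` gives
`Hom(D, Y'[1]) = 0`, and `X' ∈ ⊥(D[1])` together with 2-Calabi–Yau duality gives
`Hom(D, X'[1]) = 0`. Hence the quotient isomorphism `W ≅ Z₀` lifts to morphisms of triangles
`p : X' ⟶ Y'`, `p' : Y' ⟶ X'` with `p' ≫ p ≡ 𝟙` modulo maps factoring through `Y' ⟶ D_Z`.
So `Y'` is a retract of `X' ⊞ D_Z ∈ X`, and `Z₀ ∈ D * X[1]`.
-/

lemma CategoryTheory.Pretriangulated.Triangle.yoneda_exact₁ (T : Triangle C)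
    (hT : T ∈ distTriang C) {Y : C} (φ : T.obj₁ ⟶ Y) (hφ : T.mor₃ ≫ φ⟦(1 : ℤ)⟧' = 0) :
    ∃ σ : T.obj₂ ⟶ Y, φ = T.mor₁ ≫ σ := by
  obtain ⟨ψ, hψ⟩ := T.rotate.yoneda_exact₃ (rot_of_distTriang _ hT) (φ⟦(1 : ℤ)⟧') hφ
  let ψ' : T.obj₂⟦(1 : ℤ)⟧ ⟶ Y⟦(1 : ℤ)⟧ := ψ
  have hψ' : φ⟦(1 : ℤ)⟧' = (-T.mor₁⟦(1 : ℤ)⟧') ≫ ψ' := hψ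
  refine ⟨-(CategoryTheory.shiftFunctor C (1 : ℤ)).preimage ψ',
    (CategoryTheory.shiftFunctor C (1 : ℤ)).map_injective ?_⟩
  rw [hψ', Functor.map_comp, Functor.map_neg, Functor.map_preimage, Preadditive.neg_comp,
    Preadditive.comp_neg]

lemma distTriang_mk_of_iso_obj₁ (T : Triangle C) (hT : T ∈ distTriang C) {X : C}
    (e : X ≅ T.obj₁) :
    Triangle.mk (e.hom ≫ T.mor₁) T.mor₂ (T.mor₃ ≫ e.inv⟦(1 : ℤ)⟧') ∈ distTriang C :=
  isomorphic_distinguished _ hT _ (Triangle.isoMk _ _ e (Iso.refl _) (Iso.refl _)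
    (Category.comp_id _) ((Category.comp_id _).trans (Category.id_comp _).symm)
    ((by simp [← Functor.map_comp] : (T.mor₃ ≫ e.inv⟦(1 : ℤ)⟧') ≫ e.hom⟦(1 : ℤ)⟧' = T.mor₃).trans
      (Category.id_comp _).symm))

lemma mem_star_shiftSet_one_iff {D X : Set C} {Z : C} :
    Z ∈ star D (shiftSet X 1) ↔ ∃ X' ∈ X, ∃ A ∈ D, ∃ (f : X' ⟶ A) (g : A ⟶ Z)
      (h : Z ⟶ X'⟦(1 : ℤ)⟧), Triangle.mk f g h ∈ distTriang C := by
  constructor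
  · rintro ⟨A, B, hA, ⟨X', hX', ⟨e⟩⟩, f, g, h, hT⟩
    let e' : X' ≅ B⟦(-1 : ℤ)⟧ :=
      (shiftEquiv C (1 : ℤ)).unitIso.app X' ≪≫ (shiftFunctor C (-1 : ℤ)).mapIso e.symm
    exact ⟨X', hX', A, hA, _, _, _, distTriang_mk_of_iso_obj₁ _ (inv_rot_of_distTriang _ hT) e'⟩
  · rintro ⟨X', hX', A, hA, f, g, h, hT⟩
    exact ⟨A, X'⟦(1 : ℤ)⟧, hA, ⟨X', hX', ⟨Iso.refl _⟩⟩, g, h, -f⟦(1 : ℤ)⟧', rot_of_distTriang _ hT⟩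

lemma isLeftApprox_mor₁ {D : Set C} (T : Triangle C) (hT : T ∈ distTriang C)
    (hD : T.obj₂ ∈ D) (hZ : ∀ D' ∈ D, ∀ f : T.obj₃ ⟶ D'⟦(1 : ℤ)⟧, f = 0) :
    IsLeftApprox D T.mor₁ := by
  refine ⟨hD, fun D' hD' u => ?_⟩
  obtain ⟨t, ht⟩ := T.yoneda_exact₁ hT u (hZ D' hD' _)
  exact ⟨t, ht.symm⟩

lemma QIso.refl {D : Set C} (hD : D.Nonempty) (A : C) : QIso D A A := by
  obtain ⟨D₀, hD₀⟩ := hD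
  exact ⟨𝟙 A, 𝟙 A, ⟨D₀, hD₀, 0, 0, by simp⟩, ⟨D₀, hD₀, 0, 0, by simp⟩⟩

lemma QFactor.comp_eq_zero {D : Set C} {A B Y : C} {φ : A ⟶ B} (hφ : QFactor D φ)
    (hY : ∀ D' ∈ D, ∀ ξ : D' ⟶ Y, ξ = 0) (ψ : B ⟶ Y) : φ ≫ ψ = 0 := by
  obtain ⟨D₀, hD₀, u, v, rfl⟩ := hφ
  rw [Category.assoc, hY D₀ hD₀ (v ≫ ψ), comp_zero]

lemma SubClosed.mem_of_retract [HasBinaryBiproducts C] {S : Set C} (hS : SubClosed S)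
    {N M : C} (h : Retract N M) (hM : M ∈ S) : N ∈ S := by
  obtain ⟨Q, π, δ, hT⟩ := distinguished_cocone_triangle h.i
  have hδi : δ ≫ h.i⟦(1 : ℤ)⟧' = 0 := comp_distTriang_mor_zero₃₁ _ hT
  have hδ : δ = 0 := by
    calc δ = δ ≫ h.i⟦(1 : ℤ)⟧' ≫ h.r⟦(1 : ℤ)⟧' := by
            rw [← Functor.map_comp, h.retract, CategoryTheory.Functor.map_id, Category.comp_id]
      _ = 0 := by rw [← Category.assoc, hδi, zero_comp]
  obtain ⟨e, -, -⟩ := exists_iso_binaryBiproduct_of_distTriang _ hT hδ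
  exact hS.summand (hS.iso e hM)

lemma eq_zero_of_linearEquiv_dual {k V W : Type*} [Field k] [AddCommGroup V] [Module k V]
    [AddCommGroup W] [Module k W] (e : V ≃ₗ[k] Module.Dual k W) (hW : ∀ w : W, w = 0)
    (v : V) : v = 0 :=
  e.map_eq_zero_iff.mp (LinearMap.ext fun w => by simp [hW w])

lemma hom_obj₁_shift_eq_zero_of_isRightApprox {D : Set C} (T : Triangle C)
    (hT : T ∈ distTriang C) (hb : IsRightApprox D T.mor₂)
    (hrigid : ∀ D' ∈ D, ∀ f : D' ⟶ T.obj₂⟦(1 : ℤ)⟧, f = 0) :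
    ∀ D' ∈ D, ∀ ξ : D' ⟶ T.obj₁⟦(1 : ℤ)⟧, ξ = 0 := by
  intro D' hD' ξ
  obtain ⟨m, rfl⟩ := T.coyoneda_exact₁ hT ξ (hrigid D' hD' _)
  obtain ⟨n, rfl⟩ := hb.2 D' hD' m
  rw [Category.assoc, comp_distTriang_mor_zero₂₃ _ hT, comp_zero]

lemma obj₁_mem_of_qIso_obj₃ [HasBinaryBiproducts C] {D X : Set C} (hX : SubClosed X) (hDX : D ⊆ X)
    (T₁ T₂ : Triangle C) (hT₁ : T₁ ∈ distTriang C) (hT₂ : T₂ ∈ distTriang C)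
    (hX₁ : T₁.obj₁ ∈ X) (hD₁ : T₁.obj₂ ∈ D) (hb : IsRightApprox D T₂.mor₂)
    (hD₁₂ : ∀ f : T₂.obj₂ ⟶ T₁.obj₁⟦(1 : ℤ)⟧, f = 0)
    (hD₂ : ∀ D' ∈ D, ∀ ξ : D' ⟶ T₂.obj₁⟦(1 : ℤ)⟧, ξ = 0)
    (hQ : QIso D T₁.obj₃ T₂.obj₃) : T₂.obj₁ ∈ X := by
  obtain ⟨u, v, -, hvu⟩ := hQ
  obtain ⟨q, hq⟩ := hb.2 _ hD₁ (T₁.mor₂ ≫ u)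
  obtain ⟨p, -, hp⟩ := complete_distinguished_triangle_morphism₁ T₁ T₂ hT₁ hT₂ q u hq.symm
  obtain ⟨q', hq'⟩ := T₁.coyoneda_exact₃ hT₁ (T₂.mor₂ ≫ v) (hD₁₂ _)
  obtain ⟨p', -, hp'⟩ := complete_distinguished_triangle_morphism₁ T₂ T₁ hT₂ hT₁ q' v hq'
  have hvu₃ : v ≫ u ≫ T₂.mor₃ = T₂.mor₃ := by
    have := hvu.comp_eq_zero hD₂ T₂.mor₃
    rwa [Preadditive.sub_comp, Category.id_comp, Category.assoc, sub_eq_zero] at this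
  obtain ⟨σ, hσ⟩ := T₂.yoneda_exact₁ hT₂ (p' ≫ p - 𝟙 _) (by
    rw [Functor.map_sub, Functor.map_comp, CategoryTheory.Functor.map_id, Preadditive.comp_sub,
      reassoc_of% hp', hp, hvu₃, Category.comp_id, sub_self])
  have hX₂ : (T₁.obj₁ ⊞ T₂.obj₂) ∈ X := hX.sum hX₁ (hDX hb.1)
  refine hX.mem_of_retract ⟨biprod.lift p' T₂.mor₁, biprod.desc p (-σ), ?_⟩ hX₂
  rw [biprod.lift_desc, Preadditive.comp_neg, ← hσ]
  abel

theorem mutation_is_shift_general [HasBinaryBiproducts C]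
    (CY : ∀ A B : C, Nonempty ((A ⟶ B⟦(1 : ℤ)⟧) ≃ₗ[k] Module.Dual k (B ⟶ A⟦(1 : ℤ)⟧)))
    (D X : Set C) (hX : SubClosed X)
    (hrigid : ∀ A ∈ D, ∀ B ∈ D, ∀ f : A ⟶ B⟦(1 : ℤ)⟧, f = 0)
    (hff : ∀ M : C, (∃ (DM : C) (f : M ⟶ DM), IsLeftApprox D f) ∧
      (∃ (DM : C) (g : DM ⟶ M), IsRightApprox D g))
    (hDX : D ⊆ X)
    (hXZ : ∀ A ∈ X, ∀ D₀ ∈ D, ∀ f : A ⟶ D₀⟦(1 : ℤ)⟧, f = 0)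
    (Z₀ : C) (hZ₀ : ∀ D₀ ∈ D, ∀ f : Z₀ ⟶ D₀⟦(1 : ℤ)⟧, f = 0) :
    Z₀ ∈ star D (shiftSet X 1) ↔
      ∃ X' ∈ X, ∃ (DX' W : C) (f : X' ⟶ DX') (g : DX' ⟶ W) (h : W ⟶ X'⟦(1 : ℤ)⟧),
        (Triangle.mk f g h ∈ distTriang C) ∧ IsLeftApprox D f ∧ QIso D W Z₀ := by
  rw [mem_star_shiftSet_one_iff]
  constructor
  · rintro ⟨X', hX', A, hA, f, g, h, hT⟩
    exact ⟨X', hX', A, Z₀, f, g, h, hT, isLeftApprox_mor₁ _ hT hA hZ₀, QIso.refl ⟨A, hA⟩ Z₀⟩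
  · rintro ⟨X', hX', DX', W, f, g, h, hT₁, hf, hQ⟩
    obtain ⟨DZ, b, hb⟩ := (hff Z₀).2
    obtain ⟨Y', a, c, hT₂⟩ := distinguished_cocone_triangle₁ b
    have hY' : Y' ∈ X := obj₁_mem_of_qIso_obj₃ hX hDX _ _ hT₁ hT₂ hX' hf.1 hb
      (eq_zero_of_linearEquiv_dual (CY DZ X').some (hXZ X' hX' DZ hb.1))
      (hom_obj₁_shift_eq_zero_of_isRightApprox _ hT₂ hb (fun D' hD' => hrigid D' hD' DZ hb.1))
      hQ
    exact ⟨Y', hY', DZ, hb.1, a, b, c, hT₂⟩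

/-- with `Z = ⊥(D[1])` and `D ⊆ X ⊆ Z`, in the Iyama–Yoshino subfactor
triangulated category `Z/D` the image of `μ⁻¹(X; D) = (D * X[1]) ∩ ⊥(D[1])` is the image
of `X` shifted by the induced shift `⟨1⟩`: an object `Z₀ ∈ Z` lies in `μ⁻¹(X; D)` iff it
is isomorphic in `Z/D` to an object `X'⟨1⟩` arising from a triangle
`X' → D_{X'} → X'⟨1⟩ → X'[1]` with `X' ∈ X` and `X' → D_{X'}` a left `D`-approximation. -/
theorem mutation_is_shift [HasBinaryBiproducts C]
    (homFin : ∀ A B : C, FiniteDimensional k (A ⟶ B))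
    (CY : ∀ A B : C, Nonempty ((A ⟶ B⟦(1 : ℤ)⟧) ≃ₗ[k] Module.Dual k (B ⟶ A⟦(1 : ℤ)⟧)))
    (D X : Set C) (hD : SubClosed D) (hX : SubClosed X)
    (hrigid : ∀ A ∈ D, ∀ B ∈ D, ∀ f : A ⟶ B⟦(1 : ℤ)⟧, f = 0)
    (hff : ∀ M : C, (∃ (DM : C) (f : M ⟶ DM), IsLeftApprox D f) ∧
      (∃ (DM : C) (g : DM ⟶ M), IsRightApprox D g))
    (hDX : D ⊆ X)
    (hXZ : ∀ A ∈ X, ∀ D₀ ∈ D, ∀ f : A ⟶ D₀⟦(1 : ℤ)⟧, f = 0)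
    (Z₀ : C) (hZ₀ : ∀ D₀ ∈ D, ∀ f : Z₀ ⟶ D₀⟦(1 : ℤ)⟧, f = 0) :
    Z₀ ∈ star D (shiftSet X 1) ↔
      ∃ X' ∈ X, ∃ (DX' W : C) (f : X' ⟶ DX') (g : DX' ⟶ W) (h : W ⟶ X'⟦(1 : ℤ)⟧),
        (Triangle.mk f g h ∈ distTriang C) ∧ IsLeftApprox D f ∧ QIso D W Z₀ :=
  mutation_is_shift_general CY D X hX hrigid hff hDX hXZ Z₀ hZ₀
end
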